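/- arXiv:0909.3907 — 3 statements merged into one kernel-verified Lean document; each statement's English description precedes it below -/
import Mathlib

section
/- For a unit vector |v⟩ in the tensor product H_n ⊗ H_m (with m ≤ n) having Schmidt coefficients α_1 ≥ α_2 ≥ ... ≥ α_m, the k-th vector norm ‖|v⟩‖_{s(k)} := sup{ |⟨w|v⟩| : ‖|w⟩‖=1, SR(|w⟩) ≤ k } equals sqrt(Σ_{i=1}^k α_i²). -/
noncomputable section
open scoped BigOperators

/-- Inner product (conjugate-linear in the first argument). -/
def ip {ι : Type*} [Fintype ι] (w v : ι → ℂ) : ℂ := ∑ p, star (w p) * v p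

/-- Euclidean norm. -/
def nrm {ι : Type*} [Fintype ι] (v : ι → ℂ) : ℝ := Real.sqrt (ip v v).re

/-- Elementary tensor (product vector). -/
def prodVec {n m : ℕ} (a : Fin n → ℂ) (b : Fin m → ℂ) : Fin n × Fin m → ℂ :=
  fun p => a p.1 * b p.2

/-- Schmidt rank at most `k`: `v` is a sum of `k` product vectors. -/
def SRle {n m : ℕ} (k : ℕ) (v : Fin n × Fin m → ℂ) : Prop :=
  ∃ (a : Fin k → Fin n → ℂ) (b : Fin k → Fin m → ℂ), v = ∑ i, prodVec (a i) (b i)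

/-- The `k`-th vector norm. -/
def vecNorm {n m : ℕ} (k : ℕ) (v : Fin n × Fin m → ℂ) : ℝ :=
  sSup {r | ∃ w, nrm w = 1 ∧ SRle k w ∧ r = ‖ip w v‖}

/-- The `k`-th operator norm. -/
def opNorm {n m : ℕ} (k : ℕ) (X : Matrix (Fin n × Fin m) (Fin n × Fin m) ℂ) : ℝ :=
  sSup {r | ∃ v w, nrm v = 1 ∧ nrm w = 1 ∧ SRle k v ∧ SRle k w ∧
    r = ‖ip w (X.mulVec v)‖}

/-- Rank-one operator `|w⟩⟨v|`. -/
def outer {ι : Type*} (w v : ι → ℂ) : Matrix ι ι ℂ := Matrix.of fun p q => w p * star (v q)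

/-- `k`-block positivity. -/
def BlockPos {n m : ℕ} (k : ℕ) (Y : Matrix (Fin n × Fin m) (Fin n × Fin m) ℂ) : Prop :=
  ∀ v : Fin n × Fin m → ℂ, nrm v = 1 → SRle k v → 0 ≤ (ip v (Y.mulVec v)).re

/-- Schmidt number at most `k`. -/
def SNle {n m : ℕ} (k : ℕ) (ρ : Matrix (Fin n × Fin m) (Fin n × Fin m) ℂ) : Prop :=
  ∃ (N : ℕ) (p : Fin N → ℝ) (v : Fin N → Fin n × Fin m → ℂ),
    (∀ i, 0 ≤ p i) ∧ (∑ i, p i) = 1 ∧ (∀ i, nrm (v i) = 1) ∧ (∀ i, SRle k (v i)) ∧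
    ρ = ∑ i, (p i : ℂ) • outer (v i) (v i)

/-!
Write a vector of Schmidt rank at most `k` as `x = ∑ₛ eₛ ⊗ cₛ` with at most `k` orthonormal
`eₛ`. Then `⟨x|v⟩ = ∑ₛ ∑ᵢ αᵢ ⟨eₛ|uᵢ⟩⟨cₛ|wᵢ⟩`, and Cauchy–Schwarz bounds its square by
`(∑ᵢ αᵢ² tᵢ) ‖x‖²` with `tᵢ = ∑ₛ |⟨eₛ|uᵢ⟩|²`. By Bessel's inequality `0 ≤ tᵢ ≤ 1` and
`∑ᵢ tᵢ ≤ k`, and for such weights `∑ᵢ αᵢ² tᵢ` is largest when the whole mass sits on the `k`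
largest coefficients. Equality is attained by the normalized truncation
`∑_{i<k} αᵢ uᵢ ⊗ wᵢ`.
-/

section InnerProduct

variable {ι κ : Type*} [Fintype ι]

lemma ip_eq_inner (x y : ι → ℂ) :
    ip x y = inner ℂ (WithLp.toLp 2 x : EuclideanSpace ℂ ι) (WithLp.toLp 2 y) := by
  simp [ip, PiLp.inner_apply, mul_comm]

lemma nrm_eq_norm (x : ι → ℂ) : nrm x = ‖(WithLp.toLp 2 x : EuclideanSpace ℂ ι)‖ := by
  rw [nrm, ip_eq_inner]
  exact (congrArg Real.sqrt (inner_self_eq_norm_sq (𝕜 := ℂ) _)).trans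
    (Real.sqrt_sq (norm_nonneg _))

lemma nrm_nonneg (x : ι → ℂ) : 0 ≤ nrm x :=
  Real.sqrt_nonneg _

lemma re_ip_self (x : ι → ℂ) : (ip x x).re = nrm x ^ 2 := by
  rw [nrm_eq_norm, ip_eq_inner]
  exact inner_self_eq_norm_sq (𝕜 := ℂ) _

lemma ip_sum_left (s : Finset κ) (f : κ → ι → ℂ) (y : ι → ℂ) :
    ip (∑ i ∈ s, f i) y = ∑ i ∈ s, ip (f i) y := by
  simp only [ip, Finset.sum_apply, star_sum, Finset.sum_mul]
  exact Finset.sum_comm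

lemma ip_sum_right (s : Finset κ) (x : ι → ℂ) (g : κ → ι → ℂ) :
    ip x (∑ i ∈ s, g i) = ∑ i ∈ s, ip x (g i) := by
  simp only [ip, Finset.sum_apply, Finset.mul_sum]
  exact Finset.sum_comm

lemma ip_smul_left (z : ℂ) (x y : ι → ℂ) : ip (z • x) y = star z * ip x y := by
  simp [ip, Finset.mul_sum, mul_assoc]

lemma ip_smul_right (z : ℂ) (x y : ι → ℂ) : ip x (z • y) = z * ip x y := by
  simp [ip, Finset.mul_sum, mul_left_comm]

lemma norm_ip_comm (x y : ι → ℂ) : ‖ip x y‖ = ‖ip y x‖ := by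
  simp only [ip_eq_inner]
  exact norm_inner_symm _ _

end InnerProduct

section Orthonormal

variable {ι κ : Type*} [Fintype ι] [DecidableEq κ]

def IsOrthonormal (f : κ → ι → ℂ) : Prop :=
  ∀ i j, ip (f i) (f j) = if i = j then 1 else 0

lemma IsOrthonormal.ip_eq {f : κ → ι → ℂ} (hf : IsOrthonormal f) (i j : κ) :
    ip (f i) (f j) = if i = j then 1 else 0 :=
  hf i j

lemma IsOrthonormal.nrm_eq_one {f : κ → ι → ℂ} (hf : IsOrthonormal f) (i : κ) :
    nrm (f i) = 1 := by
  simp [nrm, hf.ip_eq]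

lemma isOrthonormal_iff_orthonormal (f : κ → ι → ℂ) :
    IsOrthonormal f ↔ Orthonormal ℂ (fun i => (WithLp.toLp 2 (f i) : EuclideanSpace ℂ ι)) := by
  simp only [IsOrthonormal, orthonormal_iff_ite, ip_eq_inner]

lemma IsOrthonormal.sum_norm_ip_sq_le [Fintype κ] {f : κ → ι → ℂ} (hf : IsOrthonormal f)
    (x : ι → ℂ) : ∑ i, ‖ip (f i) x‖ ^ 2 ≤ nrm x ^ 2 := by
  simpa only [ip_eq_inner, nrm_eq_norm] using
    ((isOrthonormal_iff_orthonormal f).mp hf).sum_inner_products_le (s := Finset.univ)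
      (WithLp.toLp 2 x)

end Orthonormal

section ProductVectors

variable {n m : ℕ} {κ δ : Type*}

lemma ip_prodVec (a c : Fin n → ℂ) (b d : Fin m → ℂ) :
    ip (prodVec a b) (prodVec c d) = ip a c * ip b d := by
  simp only [ip, prodVec, Fintype.sum_prod_type, Finset.sum_mul_sum, star_mul']
  exact Finset.sum_congr rfl fun p _ => Finset.sum_congr rfl fun q _ => by ring

lemma ip_sum_prodVec (s : Finset δ) (t : Finset κ) (a : δ → Fin n → ℂ) (b : δ → Fin m → ℂ)
    (c : κ → Fin n → ℂ) (d : κ → Fin m → ℂ) :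
    ip (∑ i ∈ s, prodVec (a i) (b i)) (∑ j ∈ t, prodVec (c j) (d j))
      = ∑ i ∈ s, ∑ j ∈ t, ip (a i) (c j) * ip (b i) (d j) := by
  rw [ip_sum_left]
  simp only [ip_sum_right, ip_prodVec]

lemma ip_sum_prodVec_orthonormal [DecidableEq κ] {u : κ → Fin n → ℂ} {w : κ → Fin m → ℂ}
    (hu : IsOrthonormal u) (hw : IsOrthonormal w) (s t : Finset κ) (x y : κ → ℂ) :
    ip (∑ i ∈ s, prodVec (x i • u i) (w i)) (∑ j ∈ t, prodVec (y j • u j) (w j))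
      = ∑ i ∈ s ∩ t, star (x i) * y i := by
  simp [ip_sum_prodVec, ip_smul_left, ip_smul_right, hu.ip_eq, hw.ip_eq, Finset.sum_ite_eq,
    Finset.sum_ite_mem, mul_comm]

lemma IsOrthonormal.nrm_sum_prodVec_sq [DecidableEq δ] [Fintype δ] {e : δ → Fin n → ℂ}
    (he : IsOrthonormal e) (c : δ → Fin m → ℂ) :
    nrm (∑ s, prodVec (e s) (c s)) ^ 2 = ∑ s, nrm (c s) ^ 2 := by
  simp [← re_ip_self, ip_sum_prodVec, he.ip_eq]

lemma sum_prodVec_sum_smul [Fintype κ] [Fintype δ] (lam : κ → δ → ℂ) (e : δ → Fin n → ℂ)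
    (b : κ → Fin m → ℂ) :
    ∑ t, prodVec (∑ s, lam t s • e s) (b t) = ∑ s, prodVec (e s) (∑ t, lam t s • b t) := by
  ext p
  simp only [prodVec, Finset.sum_apply, Pi.smul_apply, smul_eq_mul, Finset.sum_mul,
    Finset.mul_sum]
  rw [Finset.sum_comm]
  exact Finset.sum_congr rfl fun s _ => Finset.sum_congr rfl fun t _ => by ring

end ProductVectors

section SchmidtRank

variable {n m : ℕ}

lemma SRle.add_prodVec {k : ℕ} {x : Fin n × Fin m → ℂ} (hx : SRle k x) (a : Fin n → ℂ)
    (b : Fin m → ℂ) : SRle (k + 1) (x + prodVec a b) := by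
  obtain ⟨a', b', rfl⟩ := hx
  exact ⟨Fin.snoc a' a, Fin.snoc b' b, by simp [Fin.sum_univ_castSucc]⟩

lemma SRle.mono {k l : ℕ} {x : Fin n × Fin m → ℂ} (hx : SRle k x) (hkl : k ≤ l) : SRle l x := by
  induction l, hkl using Nat.le_induction with
  | base => exact hx
  | succ l _ ih =>
    have hzero : prodVec (0 : Fin n → ℂ) (0 : Fin m → ℂ) = 0 := by
      ext p; simp [prodVec]
    simpa [hzero] using ih.add_prodVec 0 0

lemma SRle_sum_prodVec {κ : Type*} (s : Finset κ) (a : κ → Fin n → ℂ) (b : κ → Fin m → ℂ) :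
    SRle s.card (∑ i ∈ s, prodVec (a i) (b i)) := by
  classical
  induction s using Finset.induction_on with
  | empty =>
    rw [Finset.sum_empty, Finset.card_empty]
    exact ⟨0, 0, by simp⟩
  | insert i s hi ih =>
    rw [Finset.sum_insert hi, Finset.card_insert_of_notMem hi, add_comm (prodVec _ _)]
    exact ih.add_prodVec (a i) (b i)

lemma exists_orthonormal_expansion {ι : Type*} [Fintype ι] {k : ℕ} (a : Fin k → ι → ℂ) :
    ∃ d ≤ k, ∃ (e : Fin d → ι → ℂ) (lam : Fin k → Fin d → ℂ),
      IsOrthonormal e ∧ ∀ t, a t = ∑ s, lam t s • e s := by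
  let a' : Fin k → EuclideanSpace ℂ ι := fun t => WithLp.toLp 2 (a t)
  let E := Submodule.span ℂ (Set.range a')
  let b := stdOrthonormalBasis ℂ E
  have hmem : ∀ t, a' t ∈ E := fun t => Submodule.subset_span ⟨t, rfl⟩
  refine ⟨_, ?_, fun s => WithLp.ofLp (b s : EuclideanSpace ℂ ι),
    fun t s => b.repr ⟨a' t, hmem t⟩ s, ?_, fun t => ?_⟩
  · simpa [Set.finrank] using finrank_range_le_card (R := ℂ) a'
  · exact (isOrthonormal_iff_orthonormal _).mpr (b.orthonormal.comp_linearIsometry E.subtypeₗᵢ)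
  · simpa using (congrArg (fun y : E => WithLp.ofLp (y : EuclideanSpace ℂ ι))
      (b.sum_repr ⟨a' t, hmem t⟩)).symm

lemma SRle.exists_orthonormal {k : ℕ} {x : Fin n × Fin m → ℂ} (hx : SRle k x) :
    ∃ d ≤ k, ∃ (e : Fin d → Fin n → ℂ) (c : Fin d → Fin m → ℂ),
      IsOrthonormal e ∧ x = ∑ s, prodVec (e s) (c s) := by
  obtain ⟨a, b, rfl⟩ := hx
  obtain ⟨d, hdk, e, lam, he, ha⟩ := exists_orthonormal_expansion a
  refine ⟨d, hdk, e, fun s => ∑ t, lam t s • b t, he, ?_⟩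
  simp only [ha, sum_prodVec_sum_smul]

end SchmidtRank

lemma sum_mul_le_sum_of_threshold {ι : Type*} [Fintype ι] (s : Finset ι) {β t : ι → ℝ} {c : ℝ}
    (hc : 0 ≤ c) (hβs : ∀ i ∈ s, c ≤ β i) (hβsc : ∀ i ∉ s, β i ≤ c) (ht0 : ∀ i, 0 ≤ t i)
    (ht1 : ∀ i, t i ≤ 1) (hts : ∑ i, t i ≤ s.card) :
    ∑ i, β i * t i ≤ ∑ i ∈ s, β i := by
  classical
  have hpt : ∀ i, β i * t i ≤ (if i ∈ s then β i - c else 0) + c * t i := by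
    intro i
    split_ifs with hi
    · nlinarith [hβs i hi, ht1 i]
    · nlinarith [hβsc i hi, ht0 i]
  calc ∑ i, β i * t i ≤ ∑ i, ((if i ∈ s then β i - c else 0) + c * t i) :=
        Finset.sum_le_sum fun i _ => hpt i
    _ = ∑ i ∈ s, β i - c * s.card + c * ∑ i, t i := by
        simp [Finset.sum_add_distrib, Finset.sum_ite_mem, Finset.sum_sub_distrib, Finset.mul_sum,
          mul_comm]
    _ ≤ ∑ i ∈ s, β i := by nlinarith [mul_le_mul_of_nonneg_left hts hc]

lemma sum_sq_mul_le_sum_filter_lt {m k : ℕ} (hk1 : 1 ≤ k) (hkm : k ≤ m) {α t : Fin m → ℝ}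
    (hα : ∀ i, 0 ≤ α i) (hanti : Antitone α) (ht0 : ∀ i, 0 ≤ t i) (ht1 : ∀ i, t i ≤ 1)
    (hts : ∑ i, t i ≤ k) :
    ∑ i, α i ^ 2 * t i ≤ ∑ i ∈ Finset.univ.filter (fun i : Fin m => (i : ℕ) < k), α i ^ 2 := by
  let j : Fin m := ⟨k - 1, by omega⟩
  refine sum_mul_le_sum_of_threshold _ (c := α j ^ 2) (sq_nonneg _) (fun i hi => ?_)
    (fun i hi => ?_) ht0 ht1 ?_
  · have hij : i ≤ j := by simp [j, Fin.le_def] at hi ⊢; omega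
    exact pow_le_pow_left₀ (hα j) (hanti hij) 2
  · have hji : j ≤ i := by simp [j, Fin.le_def] at hi ⊢; omega
    exact pow_le_pow_left₀ (hα i) (hanti hji) 2
  · simpa [Fin.card_filter_val_lt, hkm] using hts

lemma norm_sum_mul_sq_le {ι : Type*} (s : Finset ι) (f g : ι → ℂ) :
    ‖∑ i ∈ s, f i * g i‖ ^ 2 ≤ (∑ i ∈ s, ‖f i‖ ^ 2) * ∑ i ∈ s, ‖g i‖ ^ 2 := by
  calc ‖∑ i ∈ s, f i * g i‖ ^ 2 ≤ (∑ i ∈ s, ‖f i‖ * ‖g i‖) ^ 2 := by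
        gcongr
        simpa only [norm_mul] using norm_sum_le s (fun i => f i * g i)
    _ ≤ _ := Finset.sum_mul_sq_le_sq_mul_sq s _ _

section Bounds

variable {n m : ℕ} {κ δ : Type*} [DecidableEq κ] [Fintype δ] [DecidableEq δ]

lemma IsOrthonormal.sum_norm_ip_sq_le_one {ι : Type*} [Fintype ι] {e : δ → ι → ℂ}
    {u : κ → ι → ℂ} (he : IsOrthonormal e) (hu : IsOrthonormal u) (i : κ) :
    ∑ s, ‖ip (e s) (u i)‖ ^ 2 ≤ 1 := by
  simpa [hu.nrm_eq_one] using he.sum_norm_ip_sq_le (u i)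

lemma IsOrthonormal.sum_sum_norm_ip_sq_le_card [Fintype κ] {ι : Type*} [Fintype ι]
    {e : δ → ι → ℂ} {u : κ → ι → ℂ} (he : IsOrthonormal e) (hu : IsOrthonormal u) :
    ∑ i, ∑ s, ‖ip (e s) (u i)‖ ^ 2 ≤ Fintype.card δ := by
  rw [Finset.sum_comm]
  calc ∑ s, ∑ i, ‖ip (e s) (u i)‖ ^ 2 = ∑ s, ∑ i, ‖ip (u i) (e s)‖ ^ 2 := by
        simp only [norm_ip_comm (e _)]
    _ ≤ ∑ s : δ, 1 := Finset.sum_le_sum fun s _ => by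
        simpa [he.nrm_eq_one] using hu.sum_norm_ip_sq_le (e s)
    _ = Fintype.card δ := by simp

lemma norm_ip_sq_le [Fintype κ] {u : κ → Fin n → ℂ} {w : κ → Fin m → ℂ}
    (hw : IsOrthonormal w) {e : δ → Fin n → ℂ} (he : IsOrthonormal e) (α : κ → ℝ)
    (c : δ → Fin m → ℂ) :
    ‖ip (∑ s, prodVec (e s) (c s)) (∑ i, prodVec ((α i : ℂ) • u i) (w i))‖ ^ 2
      ≤ (∑ i, α i ^ 2 * ∑ s, ‖ip (e s) (u i)‖ ^ 2) * nrm (∑ s, prodVec (e s) (c s)) ^ 2 := by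
  have hexpand : ip (∑ s, prodVec (e s) (c s)) (∑ i, prodVec ((α i : ℂ) • u i) (w i))
      = ∑ p ∈ Finset.univ ×ˢ Finset.univ,
          ((α p.2 : ℂ) * ip (e p.1) (u p.2)) * ip (c p.1) (w p.2) := by
    rw [ip_sum_prodVec, Finset.sum_product]
    simp only [ip_smul_right]
  have hfirst : ∑ p ∈ (Finset.univ : Finset (δ × κ)), ‖(α p.2 : ℂ) * ip (e p.1) (u p.2)‖ ^ 2
      = ∑ i, α i ^ 2 * ∑ s, ‖ip (e s) (u i)‖ ^ 2 := by
    rw [Finset.univ_product_univ.symm, Finset.sum_product, Finset.sum_comm]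
    simp [mul_pow, Finset.mul_sum]
  have hsecond : ∑ p ∈ (Finset.univ : Finset (δ × κ)), ‖ip (c p.1) (w p.2)‖ ^ 2
      ≤ nrm (∑ s, prodVec (e s) (c s)) ^ 2 := by
    rw [he.nrm_sum_prodVec_sq, Finset.univ_product_univ.symm, Finset.sum_product]
    refine Finset.sum_le_sum fun s _ => ?_
    simpa only [norm_ip_comm (c s)] using hw.sum_norm_ip_sq_le (c s)
  rw [hexpand, ← hfirst]
  refine (norm_sum_mul_sq_le _ _ _).trans ?_
  rw [Finset.univ_product_univ]
  exact mul_le_mul_of_nonneg_left hsecond (Finset.sum_nonneg fun _ _ => sq_nonneg _)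

end Bounds

section KNorm

variable {n m k : ℕ}

lemma vecNorm_eq_of_forall_le_of_exists {v : Fin n × Fin m → ℂ} {c : ℝ} (hc : 0 ≤ c)
    (hle : ∀ x, SRle k x → ‖ip x v‖ ≤ c * nrm x)
    (hex : ∃ x, nrm x = 1 ∧ SRle k x ∧ c ≤ ‖ip x v‖) :
    vecNorm k v = c := by
  have hbound : ∀ r ∈ {r | ∃ x, nrm x = 1 ∧ SRle k x ∧ r = ‖ip x v‖}, r ≤ c := by
    rintro _ ⟨x, hx1, hxk, rfl⟩
    simpa [hx1] using hle x hxk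
  obtain ⟨x, hx1, hxk, hcx⟩ := hex
  exact le_antisymm (Real.sSup_le hbound hc)
    (le_csSup_of_le ⟨c, hbound⟩ ⟨x, hx1, hxk, rfl⟩ hcx)

variable {u : Fin m → Fin n → ℂ} {w : Fin m → Fin m → ℂ} {α : Fin m → ℝ}

lemma norm_ip_le_of_SRle (hk1 : 1 ≤ k) (hkm : k ≤ m) (hu : IsOrthonormal u)
    (hw : IsOrthonormal w) (hα : ∀ i, 0 ≤ α i) (hanti : Antitone α) {x : Fin n × Fin m → ℂ}
    (hx : SRle k x) :
    ‖ip x (∑ i, prodVec ((α i : ℂ) • u i) (w i))‖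
      ≤ √(∑ i ∈ Finset.univ.filter (fun i : Fin m => (i : ℕ) < k), α i ^ 2) * nrm x := by
  obtain ⟨d, hdk, e, c, he, rfl⟩ := hx.exists_orthonormal
  have htop := sum_sq_mul_le_sum_filter_lt hk1 hkm hα hanti
    (fun i => Finset.sum_nonneg fun s _ => sq_nonneg _) (he.sum_norm_ip_sq_le_one hu)
    ((he.sum_sum_norm_ip_sq_le_card hu).trans (by simpa using hdk))
  rw [← Real.sqrt_sq (nrm_nonneg _), ← Real.sqrt_mul' _ (sq_nonneg _),
    Real.le_sqrt (norm_nonneg _) (by positivity)]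
  exact (norm_ip_sq_le hw he α c).trans (mul_le_mul_of_nonneg_right htop (sq_nonneg _))

lemma exists_SRle_sqrt_le_norm_ip (hk1 : 1 ≤ k) (hkm : k ≤ m) (hu : IsOrthonormal u)
    (hw : IsOrthonormal w) :
    ∃ x, nrm x = 1 ∧ SRle k x ∧
      √(∑ i ∈ Finset.univ.filter (fun i : Fin m => (i : ℕ) < k), α i ^ 2)
        ≤ ‖ip x (∑ i, prodVec ((α i : ℂ) • u i) (w i))‖ := by
  set s := Finset.univ.filter (fun i : Fin m => (i : ℕ) < k)
  set S := ∑ i ∈ s, α i ^ 2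
  have hs : s.card = k := by simpa [s, Fin.card_filter_val_lt] using hkm
  by_cases hS0 : S = 0
  · let i₀ : Fin m := ⟨0, by omega⟩
    refine ⟨prodVec (u i₀) (w i₀), ?_, ?_, by rw [hS0, Real.sqrt_zero]; exact norm_nonneg _⟩
    · simp [nrm, ip_prodVec, hu.ip_eq, hw.ip_eq]
    · simpa using (SRle_sum_prodVec {i₀} u w).mono hk1
  have hS : 0 < S := (Finset.sum_nonneg fun i _ => sq_nonneg (α i)).lt_of_ne' hS0
  let x := ∑ i ∈ s, prodVec (((α i / √S : ℝ) : ℂ) • u i) (w i)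
  have hxx : ip x x = 1 := by
    rw [ip_sum_prodVec_orthonormal hu hw, Finset.inter_self]
    simp only [Complex.star_def, Complex.conj_ofReal, ← Complex.ofReal_mul, ← Complex.ofReal_sum]
    rw [Complex.ofReal_eq_one]
    simp_rw [div_mul_div_comm, Real.mul_self_sqrt hS.le, ← Finset.sum_div, ← sq]
    exact div_self hS.ne'
  have hxv : ip x (∑ i, prodVec ((α i : ℂ) • u i) (w i)) = √S := by
    rw [ip_sum_prodVec_orthonormal hu hw, Finset.inter_univ]
    simp only [Complex.star_def, Complex.conj_ofReal, ← Complex.ofReal_mul, ← Complex.ofReal_sum]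
    rw [Complex.ofReal_inj]
    simp_rw [div_mul_eq_mul_div, ← Finset.sum_div, ← sq]
    exact Real.div_sqrt
  refine ⟨x, by simp [nrm, hxx], hs ▸ SRle_sum_prodVec s _ _, ?_⟩
  rw [hxv, Complex.norm_real, Real.norm_of_nonneg (Real.sqrt_nonneg _)]

end KNorm

theorem stmt0_general {n m k : ℕ} (hk1 : 1 ≤ k) (hkm : k ≤ m)
    (v : Fin n × Fin m → ℂ) (u : Fin m → Fin n → ℂ) (w : Fin m → Fin m → ℂ)
    (α : Fin m → ℝ)
    (hu : ∀ i j, ip (u i) (u j) = if i = j then 1 else 0)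
    (hw : ∀ i j, ip (w i) (w j) = if i = j then 1 else 0)
    (hα : ∀ i, 0 ≤ α i) (hdec : ∀ i j : Fin m, i ≤ j → α j ≤ α i)
    (hv : v = fun p => ∑ i, (α i : ℂ) * u i p.1 * w i p.2) :
    vecNorm k v =
      Real.sqrt (∑ i ∈ Finset.univ.filter (fun i : Fin m => (i : ℕ) < k), α i ^ 2) := by
  have hschmidt : v = ∑ i, prodVec ((α i : ℂ) • u i) (w i) := by
    ext p
    simp [hv, prodVec, Finset.sum_apply, mul_assoc]
  rw [hschmidt]
  exact vecNorm_eq_of_forall_le_of_exists (Real.sqrt_nonneg _)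
    (fun x hx => norm_ip_le_of_SRle hk1 hkm hu hw hα hdec hx)
    (exists_SRle_sqrt_le_norm_ip hk1 hkm hu hw)

/-- the k-th vector norm equals the square root of the sum of the
k largest squared Schmidt coefficients. -/
theorem stmt0 {n m k : ℕ} (hmn : m ≤ n) (hk1 : 1 ≤ k) (hkm : k ≤ m)
    (v : Fin n × Fin m → ℂ) (u : Fin m → Fin n → ℂ) (w : Fin m → Fin m → ℂ)
    (α : Fin m → ℝ)
    (hu : ∀ i j, ip (u i) (u j) = if i = j then 1 else 0)
    (hw : ∀ i j, ip (w i) (w j) = if i = j then 1 else 0)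
    (hα : ∀ i, 0 ≤ α i) (hdec : ∀ i j : Fin m, i ≤ j → α j ≤ α i)
    (hv : v = fun p => ∑ i, (α i : ℂ) * u i p.1 * w i p.2)
    (hnv : nrm v = 1) :
    vecNorm k v =
      Real.sqrt (∑ i ∈ Finset.univ.filter (fun i : Fin m => (i : ℕ) < k), α i ^ 2) :=
  stmt0_general hk1 hkm v u w α hu hw hα hdec hv
end
end

section
/- If X ∈ L(H_n ⊗ H_m) is positive semidefinite, then ‖X‖_{S(k)} = sup{ ⟨v|X|v⟩ : |v⟩ a unit vector with SR(|v⟩) ≤ k } = sup{ Tr(Xρ) : ρ a density operator with Schmidt number SN(ρ) ≤ k }. -/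
/-!
Write `⟨w|X|v⟩` for `ip w (X *ᵥ v)`. Factoring `X = BᴴB` turns it into `⟨Bw|Bv⟩`, so Cauchy–Schwarz
gives `|⟨w|X|v⟩| ≤ √⟨w|X|w⟩ √⟨v|X|v⟩ ≤ max ⟨w|X|w⟩ ⟨v|X|v⟩`: the sesquilinear supremum is attained on
the diagonal. For `ρ = ∑ pᵢ |vᵢ⟩⟨vᵢ|` we have `Tr(Xρ) = ∑ pᵢ ⟨vᵢ|X|vᵢ⟩`, a convex combination of
diagonal values, while every `|v⟩⟨v|` with `SR(v) ≤ k` is itself such a state. All the values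
involved are nonnegative, so the suprema compare correctly even for empty sets, where `sSup ∅ = 0`.
-/

noncomputable section
open scoped BigOperators ComplexOrder

open Matrix WithLp

section InnerProduct

variable {ι : Type*} [Fintype ι]

lemma ip_eq_inner_s5 (w v : ι → ℂ) : ip w v = inner ℂ (toLp 2 w) (toLp 2 v) := by
  simp [ip, EuclideanSpace.inner_eq_star_dotProduct, dotProduct, mul_comm]

lemma nrm_eq_norm_s5 (v : ι → ℂ) : nrm v = ‖toLp 2 v‖ := by
  rw [nrm, ip_eq_inner_s5, norm_eq_sqrt_re_inner (𝕜 := ℂ)]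
  rfl

lemma ip_self_eq_nrm_sq (v : ι → ℂ) : ip v v = ((nrm v ^ 2 : ℝ) : ℂ) := by
  rw [ip_eq_inner_s5, inner_self_eq_norm_sq_to_K, nrm_eq_norm_s5]
  push_cast
  rfl

lemma norm_ip_le (w v : ι → ℂ) : ‖ip w v‖ ≤ nrm w * nrm v := by
  rw [ip_eq_inner_s5, nrm_eq_norm_s5, nrm_eq_norm_s5]
  exact norm_inner_le_norm _ _

lemma ip_conjTranspose_mul_mulVec {κ : Type*} [Fintype κ] (B : Matrix κ ι ℂ) (w v : ι → ℂ) :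
    ip w ((Bᴴ * B) *ᵥ v) = ip (B *ᵥ w) (B *ᵥ v) := by
  change star w ⬝ᵥ _ = star (B *ᵥ w) ⬝ᵥ _
  rw [← mulVec_mulVec, dotProduct_mulVec, star_mulVec]

lemma trace_mul_outer (X : Matrix ι ι ℂ) (v : ι → ℂ) :
    (X * outer v v).trace = ip v (X *ᵥ v) := by
  change (X * vecMulVec v (star v)).trace = star v ⬝ᵥ X *ᵥ v
  rw [trace_mul_comm, vecMulVec_mul, trace_vecMulVec, dotProduct_mulVec, dotProduct_comm]

lemma trace_outer (v : ι → ℂ) : (outer v v).trace = ip v v := by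
  change (vecMulVec v (star v)).trace = star v ⬝ᵥ v
  rw [trace_vecMulVec, dotProduct_comm]

lemma posSemidef_outer (v : ι → ℂ) : (outer v v).PosSemidef :=
  posSemidef_vecMulVec_self_star v

lemma re_trace_mul_sum_outer {N : Type*} [Fintype N] (X : Matrix ι ι ℂ) (p : N → ℝ)
    (v : N → ι → ℂ) :
    (X * ∑ i, (p i : ℂ) • outer (v i) (v i)).trace.re = ∑ i, p i * (ip (v i) (X *ᵥ v i)).re := by
  simp only [Finset.mul_sum, trace_sum, Complex.re_sum, Matrix.mul_smul, trace_smul,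
    trace_mul_outer, smul_eq_mul, Complex.re_ofReal_mul]

end InnerProduct

namespace Matrix.PosSemidef

variable {ι : Type*} [Fintype ι] {X : Matrix ι ι ℂ}

lemma ip_mulVec_self_nonneg (hX : X.PosSemidef) (v : ι → ℂ) : 0 ≤ ip v (X *ᵥ v) :=
  hX.dotProduct_mulVec_nonneg v

lemma re_ip_mulVec_self_nonneg (hX : X.PosSemidef) (v : ι → ℂ) : 0 ≤ (ip v (X *ᵥ v)).re :=
  (Complex.nonneg_iff.mp (hX.ip_mulVec_self_nonneg v)).1

lemma norm_ip_mulVec_self (hX : X.PosSemidef) (v : ι → ℂ) :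
    ‖ip v (X *ᵥ v)‖ = (ip v (X *ᵥ v)).re := by
  simpa using congrArg Complex.re (Complex.norm_of_nonneg' (hX.ip_mulVec_self_nonneg v))

lemma norm_ip_mulVec_le_sqrt_mul_sqrt (hX : X.PosSemidef) (w v : ι → ℂ) :
    ‖ip w (X *ᵥ v)‖ ≤ √(ip w (X *ᵥ w)).re * √(ip v (X *ᵥ v)).re := by
  classical
  open scoped MatrixOrder in
  obtain ⟨B, rfl⟩ := CStarAlgebra.nonneg_iff_eq_star_mul_self.mp (nonneg_iff_posSemidef.mpr hX)
  simp only [star_eq_conjTranspose, ip_conjTranspose_mul_mulVec]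
  exact norm_ip_le _ _

lemma norm_ip_mulVec_le_max (hX : X.PosSemidef) (w v : ι → ℂ) :
    ‖ip w (X *ᵥ v)‖ ≤ max (ip w (X *ᵥ w)).re (ip v (X *ᵥ v)).re := by
  have hw := hX.re_ip_mulVec_self_nonneg w
  calc ‖ip w (X *ᵥ v)‖ ≤ √(ip w (X *ᵥ w)).re * √(ip v (X *ᵥ v)).re :=
        hX.norm_ip_mulVec_le_sqrt_mul_sqrt w v
    _ ≤ √(max (ip w (X *ᵥ w)).re (ip v (X *ᵥ v)).re) *
          √(max (ip w (X *ᵥ w)).re (ip v (X *ᵥ v)).re) := by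
        gcongr
        exacts [le_max_left _ _, le_max_right _ _]
    _ = max (ip w (X *ᵥ w)).re (ip v (X *ᵥ v)).re := Real.mul_self_sqrt (le_max_of_le_left hw)

end Matrix.PosSemidef

section Supremum

variable {ι : Type*} [Fintype ι] (X : Matrix ι ι ℂ) (P : (ι → ℂ) → Prop)

lemma bddAbove_norm_ip_mulVec :
    BddAbove {r | ∃ v w, nrm v = 1 ∧ nrm w = 1 ∧ P v ∧ P w ∧ r = ‖ip w (X *ᵥ v)‖} := by
  classical
  refine ⟨‖toEuclideanCLM (𝕜 := ℂ) X‖, ?_⟩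
  rintro _ ⟨v, w, hv, hw, -, -, rfl⟩
  have hXv : nrm (X *ᵥ v) ≤ ‖toEuclideanCLM (𝕜 := ℂ) X‖ * nrm v := by
    simpa only [nrm_eq_norm_s5, toEuclideanCLM_toLp] using
      (toEuclideanCLM (𝕜 := ℂ) X).le_opNorm (toLp 2 v)
  calc ‖ip w (X *ᵥ v)‖ ≤ nrm w * nrm (X *ᵥ v) := norm_ip_le _ _
    _ ≤ ‖toEuclideanCLM (𝕜 := ℂ) X‖ := by rw [hw, one_mul]; simpa [hv] using hXv

lemma bddAbove_re_ip_mulVec_self :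
    BddAbove {r | ∃ v, nrm v = 1 ∧ P v ∧ r = (ip v (X *ᵥ v)).re} := by
  obtain ⟨C, hC⟩ := bddAbove_norm_ip_mulVec X P
  refine ⟨C, ?_⟩
  rintro _ ⟨v, hv, hPv, rfl⟩
  exact (Complex.re_le_norm _).trans (hC ⟨v, v, hv, hv, hPv, hPv, rfl⟩)

variable {X}

theorem Matrix.PosSemidef.sSup_norm_ip_mulVec_eq (hX : X.PosSemidef) :
    sSup {r | ∃ v w, nrm v = 1 ∧ nrm w = 1 ∧ P v ∧ P w ∧ r = ‖ip w (X *ᵥ v)‖} =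
      sSup {r | ∃ v, nrm v = 1 ∧ P v ∧ r = (ip v (X *ᵥ v)).re} := by
  have hbdd := bddAbove_re_ip_mulVec_self X P
  apply le_antisymm
  · refine Real.sSup_le ?_ (Real.sSup_nonneg ?_)
    · rintro _ ⟨v, w, hv, hw, hPv, hPw, rfl⟩
      exact (hX.norm_ip_mulVec_le_max w v).trans
        (max_le (le_csSup hbdd ⟨w, hw, hPw, rfl⟩) (le_csSup hbdd ⟨v, hv, hPv, rfl⟩))
    · rintro _ ⟨v, -, -, rfl⟩
      exact hX.re_ip_mulVec_self_nonneg v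
  · refine Real.sSup_le ?_ (Real.sSup_nonneg ?_)
    · rintro _ ⟨v, hv, hPv, rfl⟩
      exact le_csSup (bddAbove_norm_ip_mulVec X P)
        ⟨v, v, hv, hv, hPv, hPv, (hX.norm_ip_mulVec_self v).symm⟩
    · rintro _ ⟨v, w, -, -, -, -, rfl⟩
      exact norm_nonneg _

end Supremum

theorem Matrix.PosSemidef.sSup_re_trace_mul_of_SNle_eq {n m : ℕ} (k : ℕ)
    {X : Matrix (Fin n × Fin m) (Fin n × Fin m) ℂ} (hX : X.PosSemidef) :
    sSup {r | ∃ ρ : Matrix (Fin n × Fin m) (Fin n × Fin m) ℂ,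
        ρ.PosSemidef ∧ ρ.trace = 1 ∧ SNle k ρ ∧ r = ((X * ρ).trace).re} =
      sSup {r | ∃ v, nrm v = 1 ∧ SRle k v ∧ r = (ip v (X *ᵥ v)).re} := by
  set T := {r | ∃ ρ : Matrix (Fin n × Fin m) (Fin n × Fin m) ℂ,
    ρ.PosSemidef ∧ ρ.trace = 1 ∧ SNle k ρ ∧ r = ((X * ρ).trace).re}
  set S := {r | ∃ v, nrm v = 1 ∧ SRle k v ∧ r = (ip v (X *ᵥ v)).re}
  have hS : ∀ r ∈ S, 0 ≤ r ∧ r ≤ sSup S := by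
    rintro _ ⟨v, hv, hPv, rfl⟩
    exact ⟨hX.re_ip_mulVec_self_nonneg v,
      le_csSup (bddAbove_re_ip_mulVec_self X _) ⟨v, hv, hPv, rfl⟩⟩
  have hT : ∀ r ∈ T, 0 ≤ r ∧ r ≤ sSup S := by
    rintro _ ⟨ρ, -, -, ⟨N, p, v, hp, hp1, hv, hPv, rfl⟩, rfl⟩
    rw [re_trace_mul_sum_outer]
    have hvS i : (ip (v i) (X *ᵥ v i)).re ∈ S := ⟨v i, hv i, hPv i, rfl⟩
    refine ⟨Finset.sum_nonneg fun i _ => mul_nonneg (hp i) (hS _ (hvS i)).1, ?_⟩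
    calc ∑ i, p i * (ip (v i) (X *ᵥ v i)).re ≤ ∑ i, p i * sSup S :=
          Finset.sum_le_sum fun i _ => mul_le_mul_of_nonneg_left (hS _ (hvS i)).2 (hp i)
      _ = sSup S := by rw [← Finset.sum_mul, hp1, one_mul]
  have hST : S ⊆ T := by
    rintro _ ⟨v, hv, hPv, rfl⟩
    refine ⟨outer v v, posSemidef_outer v, ?_, ?_, by rw [trace_mul_outer]⟩
    · rw [trace_outer, ip_self_eq_nrm_sq, hv]
      norm_num
    · exact ⟨1, fun _ => 1, fun _ => v, fun _ => zero_le_one, by simp, fun _ => hv,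
        fun _ => hPv, by simp⟩
  exact le_antisymm
    (Real.sSup_le (fun r hr => (hT r hr).2) (Real.sSup_nonneg fun r hr => (hS r hr).1))
    (Real.sSup_le (fun r hr => le_csSup ⟨_, fun r hr => (hT r hr).2⟩ (hST hr))
      (Real.sSup_nonneg fun r hr => (hT r hr).1))

theorem stmt5_general {n m k : ℕ}
    (X : Matrix (Fin n × Fin m) (Fin n × Fin m) ℂ) (hX : X.PosSemidef) :
    opNorm k X = sSup {r | ∃ v : Fin n × Fin m → ℂ,
        nrm v = 1 ∧ SRle k v ∧ r = (ip v (X.mulVec v)).re} ∧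
    opNorm k X = sSup {r | ∃ ρ : Matrix (Fin n × Fin m) (Fin n × Fin m) ℂ,
        ρ.PosSemidef ∧ ρ.trace = 1 ∧ SNle k ρ ∧ r = ((X * ρ).trace).re} := by
  have hpure : opNorm k X = _ := hX.sSup_norm_ip_mulVec_eq (SRle k)
  exact ⟨hpure, hpure.trans (hX.sSup_re_trace_mul_of_SNle_eq k).symm⟩

/-- for positive semidefinite `X`, the k-th operator norm is the sup of
`⟨v|X|v⟩` over unit vectors of Schmidt rank at most k, and also the sup of `Tr(Xρ)`
over states of Schmidt number at most k. -/
theorem stmt5 {n m k : ℕ} (hmn : m ≤ n) (hk1 : 1 ≤ k) (hkm : k ≤ m)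
    (X : Matrix (Fin n × Fin m) (Fin n × Fin m) ℂ) (hX : X.PosSemidef) :
    opNorm k X = sSup {r | ∃ v : Fin n × Fin m → ℂ,
        nrm v = 1 ∧ SRle k v ∧ r = (ip v (X.mulVec v)).re} ∧
    opNorm k X = sSup {r | ∃ ρ : Matrix (Fin n × Fin m) (Fin n × Fin m) ℂ,
        ρ.PosSemidef ∧ ρ.trace = 1 ∧ SNle k ρ ∧ r = ((X * ρ).trace).re} :=
  stmt5_general X hX
end
end

section
/- If X = X* ∈ L(H_n ⊗ H_m) is k-block positive with maximal eigenvalue λ_max and minimal eigenvalue λ_min, then λ_min / λ_max ≥ 1 − m/k. -/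
noncomputable section
open scoped BigOperators

/-! Let `u` be a unit eigenvector for `λ_min`. Some `k` of the `m` columns of `u`
(in the product basis) carry a fraction `s ≥ k/m` of its squared norm, and the normalized
restriction `w` of `u` to those columns has Schmidt rank at most `k` and `|⟨u, w⟩|² = s`.
Expanding `w` in the eigenbasis, block positivity gives
`0 ≤ ⟨w, X w⟩ ≤ λ_min s + λ_max (1 - s)`, i.e. `λ_min / λ_max ≥ 1 - 1/s ≥ 1 - m/k`. -/

open Matrix

section InnerProduct

variable {N : Type*} [Fintype N]

lemma ip_eq_star_dotProduct (w v : N → ℂ) : ip w v = star w ⬝ᵥ v := rfl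

lemma ip_smul_left_s18 (c : ℂ) (w v : N → ℂ) : ip (c • w) v = star c * ip w v := by
  simp only [ip, Finset.mul_sum, Pi.smul_apply, smul_eq_mul, star_mul', mul_assoc]

lemma ip_smul_right_s18 (c : ℂ) (w v : N → ℂ) : ip w (c • v) = c * ip w v := by
  simp only [ip, Finset.mul_sum, Pi.smul_apply, smul_eq_mul, mul_left_comm]

lemma ip_self (v : N → ℂ) : ip v v = ((∑ p, Complex.normSq (v p) : ℝ) : ℂ) := by
  push_cast
  exact Finset.sum_congr rfl fun p _ => by rw [mul_comm]; exact Complex.mul_conj _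

lemma nrm_eq_one (v : N → ℂ) (h : ip v v = 1) : nrm v = 1 := by
  simp [nrm, h]

lemma ip_indicator_self (T : Set N) (u : N → ℂ) :
    ip u (T.indicator u) = ip (T.indicator u) (T.indicator u) := by
  refine Finset.sum_congr rfl fun p _ => ?_
  by_cases hp : p ∈ T <;> simp [hp]

lemma ip_normalize_indicator (T : Set N) (u : N → ℂ) {s : ℝ}
    (hmass : ∑ x, Complex.normSq (T.indicator u x) = s) (hs : 0 < s) :
    ip (((Real.sqrt s)⁻¹ : ℂ) • T.indicator u) (((Real.sqrt s)⁻¹ : ℂ) • T.indicator u) = 1 ∧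
      Complex.normSq (ip u (((Real.sqrt s)⁻¹ : ℂ) • T.indicator u)) = s := by
  obtain ⟨r, hr, rfl⟩ : ∃ r : ℝ, 0 < r ∧ r ^ 2 = s :=
    ⟨Real.sqrt s, Real.sqrt_pos.mpr hs, Real.sq_sqrt hs.le⟩
  have hself : ip (T.indicator u) (T.indicator u) = ((r ^ 2 : ℝ) : ℂ) := by rw [ip_self, hmass]
  have hr0 : (r : ℂ) ≠ 0 := Complex.ofReal_ne_zero.mpr hr.ne'
  rw [Real.sqrt_sq hr.le]
  constructor
  · rw [ip_smul_left_s18, ip_smul_right_s18, hself, Complex.star_def, map_inv₀, Complex.conj_ofReal]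
    push_cast
    field_simp
  · have hoverlap : ip u ((r : ℂ)⁻¹ • T.indicator u) = r := by
      rw [ip_smul_right_s18, ip_indicator_self, hself]
      push_cast
      field_simp
    rw [hoverlap, Complex.normSq_ofReal, sq]

end InnerProduct

section Spectral

variable {N : Type*} [Fintype N]

def coordMatrix (v : N → N → ℂ) : Matrix N N ℂ := Matrix.of fun j p => star (v j p)

lemma coordMatrix_mulVec_apply (v : N → N → ℂ) (x : N → ℂ) (j : N) :
    (coordMatrix v *ᵥ x) j = ip (v j) x := rfl

variable [DecidableEq N] {v : N → N → ℂ}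

lemma conjTranspose_coordMatrix_mul (horth : ∀ i j, ip (v i) (v j) = if i = j then 1 else 0) :
    (coordMatrix v)ᴴ * coordMatrix v = 1 := by
  refine mul_eq_one_comm.mp ?_
  ext i j
  simpa [Matrix.mul_apply, coordMatrix, Matrix.one_apply, ip] using horth i j

lemma ip_coordMatrix_mulVec (hv : (coordMatrix v)ᴴ * coordMatrix v = 1) (x y : N → ℂ) :
    ip (coordMatrix v *ᵥ x) (coordMatrix v *ᵥ y) = ip x y := by
  rw [ip_eq_star_dotProduct, ip_eq_star_dotProduct, star_mulVec, ← dotProduct_mulVec,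
    mulVec_mulVec, hv, one_mulVec]

lemma ip_mulVec_eq_ip_diagonal (hv : (coordMatrix v)ᴴ * coordMatrix v = 1)
    {X : Matrix N N ℂ} {μ : N → ℝ} (heig : ∀ i, X *ᵥ v i = (μ i : ℂ) • v i) (x : N → ℂ) :
    ip x (X *ᵥ x) = ip (coordMatrix v *ᵥ x)
      (diagonal (fun j => (μ j : ℂ)) *ᵥ (coordMatrix v *ᵥ x)) := by
  have hdiag : X * (coordMatrix v)ᴴ = (coordMatrix v)ᴴ * diagonal (fun j => (μ j : ℂ)) := by
    ext p j
    rw [mul_diagonal]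
    simpa [Matrix.mul_apply, coordMatrix, mulVec, dotProduct, mul_comm] using
      congrFun (heig j) p
  have hx : X *ᵥ x = (coordMatrix v)ᴴ *ᵥ (diagonal (fun j => (μ j : ℂ)) *ᵥ (coordMatrix v *ᵥ x)) :=
    calc X *ᵥ x = X *ᵥ (((coordMatrix v)ᴴ * coordMatrix v) *ᵥ x) := by rw [hv, one_mulVec]
      _ = (X * (coordMatrix v)ᴴ) *ᵥ (coordMatrix v *ᵥ x) := by
          rw [mulVec_mulVec, mulVec_mulVec, Matrix.mul_assoc]
      _ = _ := by rw [hdiag, ← mulVec_mulVec]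
  rw [hx, ip_eq_star_dotProduct, ip_eq_star_dotProduct, star_mulVec, dotProduct_mulVec]

lemma re_ip_diagonal_mulVec_le {μ : N → ℝ} {M : ℝ}
    (hM : ∀ j, μ j ≤ M) (β : N → ℂ) (hβ : ip β β = 1) (i : N) :
    (ip β (diagonal (fun j => (μ j : ℂ)) *ᵥ β)).re
      ≤ μ i * Complex.normSq (β i) + M * (1 - Complex.normSq (β i)) := by
  have hsum : ∑ j, Complex.normSq (β j) = 1 := by exact_mod_cast (ip_self β).symm.trans hβ
  have hform : (ip β (diagonal (fun j => (μ j : ℂ)) *ᵥ β)).re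
      = ∑ j, μ j * Complex.normSq (β j) := by
    simp only [ip, mulVec_diagonal, Complex.re_sum]
    refine Finset.sum_congr rfl fun j _ => ?_
    rw [mul_left_comm, mul_comm (star _), Complex.star_def, Complex.mul_conj]
    simp
  rw [← Finset.add_sum_erase _ _ (Finset.mem_univ i)] at hsum hform
  rw [hform]
  have hrest : ∑ j ∈ Finset.univ.erase i, μ j * Complex.normSq (β j)
      ≤ M * ∑ j ∈ Finset.univ.erase i, Complex.normSq (β j) := by
    rw [Finset.mul_sum]
    exact Finset.sum_le_sum fun j _ =>
      mul_le_mul_of_nonneg_right (hM j) (Complex.normSq_nonneg _)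
  rw [eq_sub_of_add_eq' hsum] at hrest
  linarith

end Spectral

section Schmidt

variable {n m k : ℕ}

lemma SRle.smul {v : Fin n × Fin m → ℂ} (h : SRle k v) (c : ℂ) : SRle k (c • v) := by
  obtain ⟨a, b, rfl⟩ := h
  refine ⟨fun i => c • a i, b, ?_⟩
  ext x
  simp [prodVec, Finset.mul_sum, mul_assoc]

lemma SRle_of_eq_zero_of_notMem_range (σ : Fin k ↪ Fin m) {v : Fin n × Fin m → ℂ}
    (hv : ∀ x, x.2 ∉ Set.range σ → v x = 0) : SRle k v := by
  classical
  refine ⟨fun i p => v (p, σ i), fun i => Pi.single (σ i) 1, ?_⟩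
  ext ⟨p, j⟩
  simp only [Finset.sum_apply, prodVec, Pi.single_apply]
  by_cases hj : j ∈ Set.range σ
  · obtain ⟨i, rfl⟩ := hj
    rw [Finset.sum_eq_single i (fun i' _ hi' => by simp [σ.injective.ne hi'.symm]) (by simp)]
    simp
  · rw [hv _ hj]
    exact (Finset.sum_eq_zero fun i _ => by rw [if_neg fun h => hj ⟨i, h.symm⟩, mul_zero]).symm

/-- Averaging over the `m` cyclic windows of `k` consecutive indices, each of which is
counted `k` times. -/
lemma exists_embedding_average_le_sum [NeZero m] (c : Fin m → ℝ) (hkm : k ≤ m) :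
    ∃ σ : Fin k ↪ Fin m, (k / m : ℝ) * ∑ j, c j ≤ ∑ i, c (σ i) := by
  let window (t : Fin m) : Fin k ↪ Fin m :=
    (Fin.castLEEmb hkm).trans (Equiv.addLeft t).toEmbedding
  have htotal : ∑ t, ∑ i, c (window t i) = k * ∑ j, c j := by
    have hshift : ∀ i, ∑ t, c (window t i) = ∑ j, c j := fun i =>
      Equiv.sum_comp (Equiv.addRight (Fin.castLE hkm i)) c
    rw [Finset.sum_comm]
    simp [hshift]
  have hm : (m : ℝ) ≠ 0 := Nat.cast_ne_zero.mpr (NeZero.ne m)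
  obtain ⟨t, -, ht⟩ := Finset.exists_le_of_sum_le Finset.univ_nonempty
    (f := fun _ => (k / m : ℝ) * ∑ j, c j) (g := fun t => ∑ i, c (window t i))
    (by rw [htotal, Finset.sum_const, Finset.card_univ, Fintype.card_fin, nsmul_eq_mul,
      ← mul_assoc, mul_div_cancel₀ _ hm])
  exact ⟨window t, ht⟩

lemma sum_normSq_indicator_cols (σ : Fin k ↪ Fin m) (u : Fin n × Fin m → ℂ) :
    ∑ x, Complex.normSq ({x : Fin n × Fin m | x.2 ∈ Set.range σ}.indicator u x)
      = ∑ i, ∑ p, Complex.normSq (u (p, σ i)) := by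
  classical
  rw [Fintype.sum_prod_type, Finset.sum_comm]
  have hcol : ∀ j,
      ∑ p, Complex.normSq ({x : Fin n × Fin m | x.2 ∈ Set.range σ}.indicator u (p, j))
        = (Finset.univ.map σ : Set (Fin m)).indicator
            (fun j => ∑ p, Complex.normSq (u (p, j))) j := by
    intro j
    by_cases hj : j ∈ Set.range σ <;> simp_all [Set.indicator]
  simp only [hcol, Finset.sum_indicator_subset _ (Finset.subset_univ _), Finset.sum_map]

end Schmidt

variable {n m k : ℕ} in
lemma exists_SRle_normSq_ip_ge (hk : 0 < k) (hkm : k ≤ m) (u : Fin n × Fin m → ℂ)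
    (hu : ip u u = 1) :
    ∃ w, ip w w = 1 ∧ SRle k w ∧ (k / m : ℝ) ≤ Complex.normSq (ip u w) := by
  have : NeZero m := ⟨by omega⟩
  obtain ⟨σ, hσ⟩ := exists_embedding_average_le_sum (fun j => ∑ p, Complex.normSq (u (p, j))) hkm
  have htotal : ∑ j, ∑ p, Complex.normSq (u (p, j)) = 1 := by
    have h := (ip_self u).symm.trans hu
    norm_cast at h
    rwa [Fintype.sum_prod_type, Finset.sum_comm] at h
  have hpos : (0 : ℝ) < k / m :=
    div_pos (by exact_mod_cast hk) (by exact_mod_cast hk.trans_le hkm)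
  set s := ∑ i, ∑ p, Complex.normSq (u (p, σ i))
  have hs : (k / m : ℝ) ≤ s := by simpa [htotal] using hσ
  obtain ⟨hunit, hoverlap⟩ :=
    ip_normalize_indicator _ u (sum_normSq_indicator_cols σ u) (hpos.trans_le hs)
  refine ⟨_, hunit, SRle.smul (SRle_of_eq_zero_of_notMem_range σ fun x hx => ?_) _,
    hs.trans_eq hoverlap.symm⟩
  exact Set.indicator_of_notMem (s := {x : Fin n × Fin m | x.2 ∈ Set.range σ}) hx u

lemma one_sub_div_le_div_of_nonneg_add_mul {a b k m q : ℝ} (hb : 0 < b) (hk : 0 < k)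
    (hm : 0 < m) (hq : k / m ≤ q) (h : 0 ≤ a * q + b * (1 - q)) : 1 - m / k ≤ a / b := by
  have hq0 : 0 < q := (div_pos hk hm).trans_le hq
  have hmq : 1 ≤ m / k * q := by
    calc (1 : ℝ) = m / k * (k / m) := by field_simp
      _ ≤ m / k * q := by gcongr
  rw [le_div_iff₀ hb]
  refine le_of_mul_le_mul_right ?_ hq0
  nlinarith

theorem stmt18_general {n m k : ℕ} (hk1 : 1 ≤ k) (hkm : k ≤ m)
    (X : Matrix (Fin n × Fin m) (Fin n × Fin m) ℂ)
    (μ : Fin n × Fin m → ℝ) (v : Fin n × Fin m → Fin n × Fin m → ℂ)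
    (horth : ∀ i j, ip (v i) (v j) = if i = j then 1 else 0)
    (heig : ∀ i, X.mulVec (v i) = (μ i : ℂ) • v i)
    (lmax lmin : ℝ) (hmax : IsGreatest (Set.range μ) lmax)
    (hmin : IsLeast (Set.range μ) lmin) (hlmax : 0 < lmax)
    (hbp : BlockPos k X) :
    1 - (m : ℝ) / k ≤ lmin / lmax := by
  obtain ⟨i₀, hi₀⟩ := hmin.1
  obtain ⟨w, hw, hwk, hoverlap⟩ :=
    exists_SRle_normSq_ip_ge hk1 hkm (v i₀) (by simpa using horth i₀ i₀)
  have hv := conjTranspose_coordMatrix_mul horth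
  have hbound := re_ip_diagonal_mulVec_le (fun j => hmax.2 ⟨j, rfl⟩) (coordMatrix v *ᵥ w)
    ((ip_coordMatrix_mulVec hv w w).trans hw) i₀
  rw [← ip_mulVec_eq_ip_diagonal hv heig, hi₀, coordMatrix_mulVec_apply] at hbound
  exact one_sub_div_le_div_of_nonneg_add_mul hlmax (by exact_mod_cast hk1)
    (by exact_mod_cast hk1.trans hkm) hoverlap ((hbp w (nrm_eq_one w hw) hwk).trans hbound)

/-- for a k-block positive Hermitian operator,
`λ_min / λ_max ≥ 1 - m/k`. -/
theorem stmt18 {n m k : ℕ} (hmn : m ≤ n) (hk1 : 1 ≤ k) (hkm : k ≤ m)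
    (X : Matrix (Fin n × Fin m) (Fin n × Fin m) ℂ) (hX : X.IsHermitian)
    (μ : Fin n × Fin m → ℝ) (v : Fin n × Fin m → Fin n × Fin m → ℂ)
    (horth : ∀ i j, ip (v i) (v j) = if i = j then 1 else 0)
    (heig : ∀ i, X.mulVec (v i) = (μ i : ℂ) • v i)
    (lmax lmin : ℝ) (hmax : IsGreatest (Set.range μ) lmax)
    (hmin : IsLeast (Set.range μ) lmin) (hlmax : 0 < lmax)
    (hbp : BlockPos k X) :
    1 - (m : ℝ) / k ≤ lmin / lmax :=
  stmt18_general hk1 hkm X μ v horth heig lmax lmin hmax hmin hlmax hbp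
end
end
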